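/- Let g be a free R-module of rank m with basis e_1,...,e_m carrying a Lie algebra structure, U(g) its universal enveloping algebra, and U* the R-linear dual of U(g) with basis elements d^j t dual to the PBW monomials e^j. Then the convolution product on U* (dual to the comultiplication μ(L) = L⊗1 + 1⊗L on U(g)) satisfies d^r t ⋆ d^s t = binom(r+s, r) d^{r+s} t for all multi-indices r, s, where binom(r+s,r) = Π_i binom(r_i+s_i, r_i). -/

import Mathlib

open TensorProduct

noncomputable section

variable (m : ℕ) (R : Type*) [CommRing R] [IsDomain R] [CharZero R]

/-- By the Poincaré–Birkhoff–Witt theorem, the universal enveloping algebra `U(g)` of a Lie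
algebra `g` free of rank `m` over `R` has `R`-basis the ordered monomials `e^j`, and as a
coalgebra it is the coalgebra with comultiplication determined by the primitive generators
`μ(e_i) = e_i ⊗ 1 + 1 ⊗ e_i`.  We realise this coalgebra on `MvPolynomial (Fin m) R`. -/
def comul : MvPolynomial (Fin m) R →ₐ[R]
    (MvPolynomial (Fin m) R ⊗[R] MvPolynomial (Fin m) R) :=
  MvPolynomial.aeval fun i =>
    MvPolynomial.X i ⊗ₜ[R] (1 : MvPolynomial (Fin m) R) +
      (1 : MvPolynomial (Fin m) R) ⊗ₜ[R] MvPolynomial.X i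

/-- The convolution product on `U* = Hom_R(U(g), R)`, dual to the comultiplication:
`(φ ⋆ ψ)(x) = (φ ⊗ ψ)(μ(x))`. -/
def convMul (φ ψ : MvPolynomial (Fin m) R →ₗ[R] R) :
    MvPolynomial (Fin m) R →ₗ[R] R :=
  (TensorProduct.lid R R).toLinearMap ∘ₗ TensorProduct.map φ ψ ∘ₗ (comul m R).toLinearMap

/-! Since `μ` is multiplicative and `μ(e_i) = e_i ⊗ 1 + 1 ⊗ e_i`, the image of a PBW monomial is
`μ(e^j) = ∏ᵢ (e_i ⊗ 1 + 1 ⊗ e_i) ^ jᵢ`. Expanding each factor by the binomial theorem gives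
`μ(e^j) = Σ_{a + b = j} binom(j, a) e^a ⊗ e^b`, and `d^r ⊗ d^s` picks out the single term
`a = r`, `b = s`. -/

open MvPolynomial Finset

theorem Finset.prod_add_pow_eq_sum_piFinset {ι A : Type*} [Fintype ι] [DecidableEq ι]
    [CommSemiring A] (x y : ι → A) (n : ι → ℕ) :
    ∏ i, (x i + y i) ^ n i =
      ∑ κ ∈ Fintype.piFinset fun i => antidiagonal (n i),
        (∏ i, (n i).choose (κ i).1) • ((∏ i, x i ^ (κ i).1) * ∏ i, y i ^ (κ i).2) := by
  simp_rw [fun a b : A => (Commute.all a b).add_pow', prod_univ_sum, prod_smul, prod_mul_distrib]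

theorem Finsupp.prod_add_choose_eq_prod_univ {σ : Type*} [Fintype σ] (r s : σ →₀ ℕ) :
    ((r + s).prod fun i n => n.choose (r i)) = ∏ i, (r i + s i).choose (r i) :=
  Finset.prod_subset (subset_univ _) fun i _ hi => by
    obtain ⟨hr, -⟩ : r i = 0 ∧ s i = 0 := by simpa using hi
    simp [hr]

section TensorSquare

variable {σ R : Type*} [CommSemiring R] [Fintype σ] [DecidableEq σ]

theorem MvPolynomial.aeval_tmul_one_add_one_tmul_monomial (j : σ →₀ ℕ) :
    aeval (fun i => X i ⊗ₜ[R] (1 : MvPolynomial σ R) + 1 ⊗ₜ X i) (monomial j (1 : R)) =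
      ∑ κ ∈ Fintype.piFinset fun i => antidiagonal (j i),
        (∏ i, (j i).choose (κ i).1) •
          ((∏ i, X i ^ (κ i).1 : MvPolynomial σ R) ⊗ₜ[R] ∏ i, X i ^ (κ i).2) := by
  have hmonomial : monomial j (1 : R) = ∏ i, X i ^ j i := by
    rw [monomial_eq, C_1, one_mul, Finsupp.prod_fintype _ _ fun _ => pow_zero _]
  have hprimitive : ∀ i, X i ⊗ₜ[R] (1 : MvPolynomial σ R) + 1 ⊗ₜ X i =
      Algebra.TensorProduct.includeLeft (S := R) (X i : MvPolynomial σ R) +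
        Algebra.TensorProduct.includeRight (X i : MvPolynomial σ R) :=
    fun i => rfl
  simp_rw [hmonomial, map_prod, map_pow, aeval_X, hprimitive, prod_add_pow_eq_sum_piFinset,
    ← map_pow, ← map_prod, Algebra.TensorProduct.includeLeft_apply,
    Algebra.TensorProduct.includeRight_apply, Algebra.TensorProduct.tmul_mul_tmul, mul_one, one_mul]

theorem MvPolynomial.lid_map_lcoeff_aeval_monomial (r s j : σ →₀ ℕ) :
    TensorProduct.lid R R (TensorProduct.map (lcoeff R r) (lcoeff R s)
      (aeval (fun i => X i ⊗ₜ[R] (1 : MvPolynomial σ R) + 1 ⊗ₜ X i) (monomial j (1 : R)))) =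
      if r + s = j then ∏ i, ((j i).choose (r i) : R) else 0 := by
  have hcoeff : ∀ κ : σ → ℕ × ℕ,
      coeff r (∏ i, X i ^ (κ i).1 : MvPolynomial σ R) * coeff s (∏ i, X i ^ (κ i).2) =
        if κ = fun i => (r i, s i) then 1 else 0 := by
    intro κ
    rw [coeff_prod_X_pow, coeff_prod_X_pow, ite_zero_mul_ite_zero, mul_one]
    refine if_congr ?_ rfl rfl
    simp only [Finsupp.ext_iff, _root_.funext_iff, Prod.ext_iff, Finsupp.indicator_apply, mem_univ,
      dite_true, forall_and, eq_comm]
  simp_rw [aeval_tmul_one_add_one_tmul_monomial, map_sum, map_nsmul, TensorProduct.map_tmul,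
    TensorProduct.lid_tmul, lcoeff_apply, smul_eq_mul, hcoeff, smul_ite, smul_zero, sum_ite_eq',
    Fintype.mem_piFinset, HasAntidiagonal.mem_antidiagonal, ← Finsupp.add_apply,
    ← Finsupp.ext_iff, nsmul_eq_mul, Nat.cast_prod, mul_one]

end TensorSquare

/-- `MvPolynomial.lcoeff R j` plays the role of the dual basis element `d^j t` of `U*`. -/
theorem convMul_dual_basis (r s : Fin m →₀ ℕ) :
    convMul m R (MvPolynomial.lcoeff R r) (MvPolynomial.lcoeff R s) =
      ((r + s).prod fun i n => n.choose (r i) : ℕ) • MvPolynomial.lcoeff R (r + s) := by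
  refine (basisMonomials (Fin m) R).ext fun j => ?_
  rw [coe_basisMonomials]
  change TensorProduct.lid R R (TensorProduct.map _ _ (comul m R (monomial j 1))) = _
  rw [comul, lid_map_lcoeff_aeval_monomial, LinearMap.smul_apply, lcoeff_apply, coeff_monomial]
  by_cases h : r + s = j
  · subst h
    simp [Finsupp.prod_add_choose_eq_prod_univ]
  · simp [h, Ne.symm h]

end
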